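/- arXiv:2409.13624 — 4 statements merged into one kernel-verified Lean document; each statement's English description precedes it below -/
import Mathlib

section
/- Let E be a real inner product space, x_c ∈ E, r > 0, and let η₁ > 0 and η₂ be real numbers with η₂ ≥ η₁·r + (‖x_c‖ + √r)². Set c = η₂ − η₁·r and V(x) = max(‖x‖², η₂ − η₁‖x − x_c‖²). Then c > 0; V(x) = c for every x on the boundary sphere ‖x − x_c‖ = √r; and V(y) ≥ c for every y in the closed ball ‖y − x_c‖ ≤ √r. (Hence V satisfies the level-set separation condition V(x) = c on ∂O with c ≤ min over the closure of O of V.) -/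
/-! On the sphere `‖x - x_c‖ = √r` the barrier term equals `c`, while the triangle inequality
gives `‖x‖² ≤ (‖x_c‖ + √r)² ≤ c`, so the maximum is `c`. Inside the ball the barrier term only
grows, since `η₁ > 0`. -/

open Real

section

variable {E : Type*} [SeminormedAddCommGroup E]

theorem sq_norm_le_of_norm_sub_le {x a : E} {ρ : ℝ} (h : ‖x - a‖ ≤ ρ) :
    ‖x‖ ^ 2 ≤ (‖a‖ + ρ) ^ 2 :=
  pow_le_pow_left₀ (norm_nonneg x) ((norm_le_norm_add_norm_sub' x a).trans (by linarith)) 2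

theorem max_sq_norm_sub_mul_sq_norm_sub_eq {x a : E} {ρ η₁ η₂ : ℝ} (h : ‖x - a‖ = ρ)
    (hη₂ : (‖a‖ + ρ) ^ 2 ≤ η₂ - η₁ * ρ ^ 2) :
    max (‖x‖ ^ 2) (η₂ - η₁ * ‖x - a‖ ^ 2) = η₂ - η₁ * ρ ^ 2 := by
  rw [h]
  exact max_eq_right ((sq_norm_le_of_norm_sub_le h.le).trans hη₂)

theorem sub_mul_sq_le_sub_mul_sq_norm_sub {y a : E} {ρ η₁ : ℝ} (η₂ : ℝ) (hη₁ : 0 ≤ η₁)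
    (h : ‖y - a‖ ≤ ρ) : η₂ - η₁ * ρ ^ 2 ≤ η₂ - η₁ * ‖y - a‖ ^ 2 :=
  sub_le_sub_left (mul_le_mul_of_nonneg_left (pow_le_pow_left₀ (norm_nonneg _) h 2) hη₁) η₂

end

theorem nclbf_level_set_separation_general
    {E : Type*} [NormedAddCommGroup E]
    (x_c : E) (r η₁ η₂ : ℝ) (hr : 0 < r) (hη₁ : 0 < η₁)
    (hη₂ : η₁ * r + (‖x_c‖ + Real.sqrt r) ^ 2 ≤ η₂)
    (c : ℝ) (hc : c = η₂ - η₁ * r)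
    (V : E → ℝ) (hV : ∀ x, V x = max (‖x‖ ^ 2) (η₂ - η₁ * ‖x - x_c‖ ^ 2)) :
    0 < c ∧
    (∀ x : E, ‖x - x_c‖ = Real.sqrt r → V x = c) ∧
    (∀ y : E, ‖y - x_c‖ ≤ Real.sqrt r → c ≤ V y) := by
  have hsqrt : sqrt r ^ 2 = r := sq_sqrt hr.le
  have hc_ge : (‖x_c‖ + sqrt r) ^ 2 ≤ η₂ - η₁ * sqrt r ^ 2 := by rw [hsqrt]; linarith
  subst hc
  refine ⟨?_, fun x hx => ?_, fun y hy => ?_⟩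
  · have : 0 < sqrt r := sqrt_pos.2 hr
    rw [← hsqrt]
    exact lt_of_lt_of_le (by positivity) hc_ge
  · rw [hV, max_sq_norm_sub_mul_sq_norm_sub_eq hx hc_ge, hsqrt]
  · rw [hV, ← hsqrt]
    exact le_max_of_le_right (sub_mul_sq_le_sub_mul_sq_norm_sub η₂ hη₁.le hy)

/-- Level-set separation of the NCLBF: with `c = η₂ - η₁ r`, one has `c > 0`,
`V(x) = c` on the boundary sphere of the unsafe ball, and `V ≥ c` on the closed unsafe ball. -/
theorem nclbf_level_set_separation
    {E : Type*} [NormedAddCommGroup E] [InnerProductSpace ℝ E]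
    (x_c : E) (r η₁ η₂ : ℝ) (hr : 0 < r) (hη₁ : 0 < η₁)
    (hη₂ : η₁ * r + (‖x_c‖ + Real.sqrt r) ^ 2 ≤ η₂)
    (c : ℝ) (hc : c = η₂ - η₁ * r)
    (V : E → ℝ) (hV : ∀ x, V x = max (‖x‖ ^ 2) (η₂ - η₁ * ‖x - x_c‖ ^ 2)) :
    0 < c ∧
    (∀ x : E, ‖x - x_c‖ = Real.sqrt r → V x = c) ∧
    (∀ y : E, ‖y - x_c‖ ≤ Real.sqrt r → c ≤ V y) :=
  nclbf_level_set_separation_general x_c r η₁ η₂ hr hη₁ hη₂ c hc V hV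
end

section
/- Let E be a real inner product space, x_c ∈ E, r > 0, η₁ > 0 and w > 0, and set η₂ = η₁·r + (‖x_c‖ + √r)² + w. Define x̄_c = (η₁/(1 + η₁))·x_c and r̄ = ((1 + η₁)·η₂ − η₁·‖x_c‖²)/(1 + η₁)². Then for every x with ‖x − x_c‖ ≤ √r one has ‖x − x̄_c‖² < r̄; i.e., the closed unsafe ball lies strictly inside the sphere R₃ of radius √r̄ centred at x̄_c (strict enclosure provided by the positive buffer w). -/
/-- With positive buffer `w > 0`, the closed unsafe ball lies strictly inside the
sphere `R₃` of radius `√r̄` centred at `x̄_c`. -/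
theorem unsafe_ball_strictly_inside_R3
    {E : Type*} [NormedAddCommGroup E] [InnerProductSpace ℝ E]
    (x_c : E) (r η₁ w η₂ : ℝ) (hr : 0 < r) (hη₁ : 0 < η₁) (hw : 0 < w)
    (hη₂ : η₂ = η₁ * r + (‖x_c‖ + Real.sqrt r) ^ 2 + w)
    (xbar : E) (hxbar : xbar = (η₁ / (1 + η₁)) • x_c)
    (rbar : ℝ) (hrbar : rbar = ((1 + η₁) * η₂ - η₁ * ‖x_c‖ ^ 2) / (1 + η₁) ^ 2) :
    ∀ x : E, ‖x - x_c‖ ≤ Real.sqrt r → ‖x - xbar‖ ^ 2 < rbar := by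
  intro x hx
  set s := Real.sqrt r with hs
  have hs0 : 0 ≤ s := Real.sqrt_nonneg r
  have hs2 : s ^ 2 = r := Real.sq_sqrt hr.le
  have h1 : ‖x - x_c‖ ^ 2 ≤ r := by
    have := pow_le_pow_left₀ (norm_nonneg _) hx 2
    linarith [this, hs2]
  have h2 : ‖x‖ ≤ ‖x_c‖ + s := by
    calc ‖x‖ = ‖(x - x_c) + x_c‖ := by rw [sub_add_cancel]
    _ ≤ ‖x - x_c‖ + ‖x_c‖ := norm_add_le _ _
    _ ≤ ‖x_c‖ + s := by linarith
  have h3 : ‖x‖ ^ 2 ≤ (‖x_c‖ + s) ^ 2 :=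
    pow_le_pow_left₀ (norm_nonneg _) h2 2
  have hd : (0:ℝ) < 1 + η₁ := by linarith
  -- expand norms via inner products
  have e1 : ‖x - x_c‖ ^ 2 = ‖x‖ ^ 2 - 2 * inner ℝ x x_c + ‖x_c‖ ^ 2 :=
    @norm_sub_sq_real E _ _ x x_c
  have e2 : ‖x - xbar‖ ^ 2 = ‖x‖ ^ 2 - 2 * inner ℝ x xbar + ‖xbar‖ ^ 2 :=
    @norm_sub_sq_real E _ _ x xbar
  have e3 : (inner ℝ x xbar : ℝ) = (η₁ / (1 + η₁)) * inner ℝ x x_c := by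
    rw [hxbar, real_inner_smul_right]
  have e4 : ‖xbar‖ ^ 2 = (η₁ / (1 + η₁)) ^ 2 * ‖x_c‖ ^ 2 := by
    rw [hxbar, norm_smul, mul_pow, Real.norm_eq_abs, sq_abs]
  -- key identity
  have key : rbar - ‖x - xbar‖ ^ 2 = (η₂ - η₁ * ‖x - x_c‖ ^ 2 - ‖x‖ ^ 2) / (1 + η₁) := by
    rw [hrbar, e2, e3, e4, e1]
    field_simp
    ring
  have hpos : 0 < η₂ - η₁ * ‖x - x_c‖ ^ 2 - ‖x‖ ^ 2 := by nlinarith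
  have : 0 < rbar - ‖x - xbar‖ ^ 2 := by
    rw [key]; positivity
  linarith
end

section
/- Let E be a real inner product space, x_c ∈ E, η₁ > 0 and η₂ ∈ ℝ, and set x̄_c = (η₁/(1 + η₁))·x_c and r̄ = ((1 + η₁)·η₂ − η₁·‖x_c‖²)/(1 + η₁)². If x ∈ E satisfies both ‖x − x̄_c‖² = r̄ and ‖x‖² = ⟨x, x̄_c⟩ (i.e., x lies on the sphere R₃ and on a hyperplane tangent to that sphere passing through the origin), then ‖x‖² = φ(x_c), where φ(x_c) = (η₁·‖x_c‖² − η₂)/(η₁ + 1). -/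
open scoped InnerProductSpace

/-!
Expanding `‖x - x̄_c‖² = r̄` and substituting the tangency condition `⟪x, x̄_c⟫ = ‖x‖²` gives
the Pythagorean relation `‖x‖² = ‖x̄_c‖² - r̄` (the contact point, the origin and the centre
form a right angle at the contact point); inserting the values of `x̄_c` and `r̄` and cancelling
a factor `1 + η₁` yields `φ(x_c)`.
-/

theorem norm_sq_eq_norm_sq_sub_of_norm_sub_sq_of_norm_sq_eq_inner
    {E : Type*} [NormedAddCommGroup E] [InnerProductSpace ℝ E] {x c : E} {r : ℝ}
    (hsphere : ‖x - c‖ ^ 2 = r) (htangent : ‖x‖ ^ 2 = ⟪x, c⟫_ℝ) :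
    ‖x‖ ^ 2 = ‖c‖ ^ 2 - r := by
  rw [← hsphere, norm_sub_sq_real, ← htangent]
  ring

theorem div_one_add_sq_mul_sub_div_one_add_sq {η₁ : ℝ} (hη₁ : 1 + η₁ ≠ 0) (N η₂ : ℝ) :
    (η₁ / (1 + η₁)) ^ 2 * N - ((1 + η₁) * η₂ - η₁ * N) / (1 + η₁) ^ 2
      = (η₁ * N - η₂) / (η₁ + 1) := by
  rw [add_comm η₁ 1]
  field_simp
  ring

/-- A point of the sphere `R₃` lying on a tangent hyperplane through the origin
has squared norm `φ(x_c) = (η₁‖x_c‖² - η₂)/(η₁+1)`. -/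
theorem contact_point_norm_sq
    {E : Type*} [NormedAddCommGroup E] [InnerProductSpace ℝ E]
    (x_c : E) (η₁ η₂ : ℝ) (hη₁ : 0 < η₁)
    (xbar : E) (hxbar : xbar = (η₁ / (1 + η₁)) • x_c)
    (rbar : ℝ) (hrbar : rbar = ((1 + η₁) * η₂ - η₁ * ‖x_c‖ ^ 2) / (1 + η₁) ^ 2)
    (x : E) (hsphere : ‖x - xbar‖ ^ 2 = rbar) (htangent : ‖x‖ ^ 2 = ⟪x, xbar⟫_ℝ) :
    ‖x‖ ^ 2 = (η₁ * ‖x_c‖ ^ 2 - η₂) / (η₁ + 1) := by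
  have hxbar_sq : ‖xbar‖ ^ 2 = (η₁ / (1 + η₁)) ^ 2 * ‖x_c‖ ^ 2 := by
    rw [hxbar, norm_smul, mul_pow, Real.norm_eq_abs, sq_abs]
  rw [norm_sq_eq_norm_sq_sub_of_norm_sub_sq_of_norm_sq_eq_inner hsphere htangent, hxbar_sq, hrbar]
  exact div_one_add_sq_mul_sub_div_one_add_sq (by linarith) _ _
end

section
/- Let E be a real inner product space, x_c ∈ E, r > 0, η₁ > 0, and η₂ ≥ η₁·r + (‖x_c‖ + √r)². Define V(x) = max(‖x‖², η₂ − η₁‖x − x_c‖²) and c = η₂ − η₁·r. Let x : ℝ → E be a trajectory, ρ₀ > 0, and suppose that for every t ≥ 0 the function t ↦ V(x(t)) has derivative v'(t) at t with v'(t) ≤ −ρ₀·V(x(t)), and that V(x(0)) < c. Then for all t ≥ 0: (i) ‖x(t) − x_c‖ ≥ √r (the trajectory never enters the unsafe ball), and (ii) ‖x(t)‖² ≤ V(x(0))·exp(−ρ₀·t); hence x(t) → 0 as t → ∞. -/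
/-- Safe stabilization along a closed-loop trajectory: if `V(x(t))` satisfies the
differential decrease inequality `v'(t) ≤ -ρ₀ V(x(t))` for `t ≥ 0` and `V(x(0)) < c = η₂ - η₁ r`,
then the trajectory never enters the unsafe ball and `‖x(t)‖² ≤ V(x(0)) e^{-ρ₀ t}`, so
`x(t) → 0`. -/
theorem safe_stabilization_along_trajectory
    {E : Type*} [NormedAddCommGroup E] [InnerProductSpace ℝ E]
    (x_c : E) (r η₁ η₂ : ℝ) (hr : 0 < r) (hη₁ : 0 < η₁)
    (hη₂ : η₁ * r + (‖x_c‖ + Real.sqrt r) ^ 2 ≤ η₂)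
    (V : E → ℝ) (hV : ∀ y, V y = max (‖y‖ ^ 2) (η₂ - η₁ * ‖y - x_c‖ ^ 2))
    (c : ℝ) (hc : c = η₂ - η₁ * r)
    (x : ℝ → E) (ρ₀ : ℝ) (hρ₀ : 0 < ρ₀) (v' : ℝ → ℝ)
    (hderiv : ∀ t : ℝ, 0 ≤ t → HasDerivAt (fun s => V (x s)) (v' t) t)
    (hdec : ∀ t : ℝ, 0 ≤ t → v' t ≤ -ρ₀ * V (x t))
    (hinit : V (x 0) < c) :
    (∀ t : ℝ, 0 ≤ t →
      Real.sqrt r ≤ ‖x t - x_c‖ ∧ ‖x t‖ ^ 2 ≤ V (x 0) * Real.exp (-ρ₀ * t)) ∧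
    Filter.Tendsto x Filter.atTop (nhds 0) := by
  set g : ℝ → ℝ := fun t => V (x t) * Real.exp (ρ₀ * t) with hg
  have hgderiv : ∀ t : ℝ, 0 ≤ t →
      HasDerivAt g (v' t * Real.exp (ρ₀ * t) + V (x t) * (Real.exp (ρ₀ * t) * ρ₀)) t := by
    intro t ht
    have h1 : HasDerivAt (fun s : ℝ => Real.exp (ρ₀ * s)) (Real.exp (ρ₀ * t) * (ρ₀ * 1)) t :=
      ((hasDerivAt_id t).const_mul ρ₀).exp
    have h2 := (hderiv t ht).mul h1
    rw [mul_one] at h2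
    exact h2
  have hgle : ∀ t : ℝ, 0 ≤ t → g t ≤ g 0 := by
    intro t ht
    have hanti : AntitoneOn g (Set.Ici (0 : ℝ)) := by
      apply antitoneOn_of_deriv_nonpos (convex_Ici 0)
      · intro s hs
        exact ((hgderiv s hs).continuousAt).continuousWithinAt
      · intro s hs
        rw [interior_Ici] at hs
        exact ((hgderiv s hs.le).differentiableAt).differentiableWithinAt
      · intro s hs
        rw [interior_Ici] at hs
        have hs' : (0 : ℝ) ≤ s := le_of_lt hs
        rw [(hgderiv s hs').deriv]
        have := hdec s hs'
        have hexp : (0 : ℝ) < Real.exp (ρ₀ * s) := Real.exp_pos _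
        nlinarith [hexp]
    exact hanti (Set.self_mem_Ici) (Set.mem_Ici.2 ht) ht
  have hVle : ∀ t : ℝ, 0 ≤ t → V (x t) ≤ V (x 0) * Real.exp (-ρ₀ * t) := by
    intro t ht
    have h := hgle t ht
    have hexp : (0 : ℝ) < Real.exp (ρ₀ * t) := Real.exp_pos _
    have hne : Real.exp (ρ₀ * t) ≠ 0 := ne_of_gt hexp
    have : V (x 0) * Real.exp (-ρ₀ * t) = (V (x 0) * Real.exp (ρ₀ * 0)) / Real.exp (ρ₀ * t) := by
      rw [mul_zero, Real.exp_zero, mul_one, neg_mul, Real.exp_neg, div_eq_mul_inv]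
    rw [this, le_div_iff₀ hexp]
    simpa [hg] using h
  have hVlb : ∀ y : E, ‖y‖ ^ 2 ≤ V y := fun y => (hV y) ▸ le_max_left _ _
  have hV0nonneg : 0 ≤ V (x 0) := le_trans (sq_nonneg _) (hVlb (x 0))
  have hmain : ∀ t : ℝ, 0 ≤ t →
      Real.sqrt r ≤ ‖x t - x_c‖ ∧ ‖x t‖ ^ 2 ≤ V (x 0) * Real.exp (-ρ₀ * t) := by
    intro t ht
    have hVt : V (x t) ≤ V (x 0) * Real.exp (-ρ₀ * t) := hVle t ht
    have hexp1 : Real.exp (-ρ₀ * t) ≤ 1 := by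
      apply Real.exp_le_one_iff.2
      nlinarith
    have hVtc : V (x t) < c := by
      calc V (x t) ≤ V (x 0) * Real.exp (-ρ₀ * t) := hVt
        _ ≤ V (x 0) * 1 := by nlinarith
        _ < c := by simpa using hinit
    constructor
    · by_contra h
      push_neg at h
      have h1 : ‖x t - x_c‖ ^ 2 < r := by
        have := pow_lt_pow_left₀ h (norm_nonneg _) two_ne_zero
        simpa [Real.sq_sqrt hr.le] using this
      have h2 : c < η₂ - η₁ * ‖x t - x_c‖ ^ 2 := by
        rw [hc]; nlinarith
      have h3 : η₂ - η₁ * ‖x t - x_c‖ ^ 2 ≤ V (x t) := (hV (x t)) ▸ le_max_right _ _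
      linarith
    · exact le_trans (hVlb (x t)) hVt
  refine ⟨hmain, ?_⟩
  rw [← tendsto_sub_nhds_zero_iff]
  simp only [sub_zero]
  rw [tendsto_zero_iff_norm_tendsto_zero]
  have hbound : Filter.Tendsto (fun t => V (x 0) * Real.exp (-ρ₀ * t))
      Filter.atTop (nhds 0) := by
    have h1 : Filter.Tendsto (fun t : ℝ => -ρ₀ * t) Filter.atTop Filter.atBot := by
      apply Filter.Tendsto.const_mul_atTop_of_neg (by linarith : -ρ₀ < 0) Filter.tendsto_id
    have h2 := Real.tendsto_exp_atBot.comp h1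
    simpa using h2.const_mul (V (x 0))
  have hsq : Filter.Tendsto (fun t => ‖x t‖ ^ 2) Filter.atTop (nhds 0) := by
    apply squeeze_zero' (g := fun t => V (x 0) * Real.exp (-ρ₀ * t))
    · filter_upwards [Filter.eventually_ge_atTop (0 : ℝ)] with t ht
      exact sq_nonneg _
    · filter_upwards [Filter.eventually_ge_atTop (0 : ℝ)] with t ht
      exact (hmain t ht).2
    · exact hbound
  have := (Real.continuous_sqrt.tendsto 0).comp hsq
  simp only [Real.sqrt_zero] at this
  convert this using 2 with t
  simp [Function.comp, Real.sqrt_sq_eq_abs, abs_of_nonneg (norm_nonneg _)]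
end
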